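/- If for every realization y the function S ↦ f(S, y) is submodular, then for every fixed τ the auxiliary function H(S, τ) = τ − (1/α)·E_y[(τ − f(S,y))⁺] is submodular in S. -/
import Mathlib

/-- Key scalar inequality: if x + y = a + b, a ≤ x, a ≤ y, then
    (τ-x)⁺ + (τ-y)⁺ ≤ (τ-a)⁺ + (τ-b)⁺. -/
lemma key_plus (τ a b x y : ℝ) (hax : a ≤ x) (hay : a ≤ y)
    (hsum : x + y = a + b) :
    max (τ - x) 0 + max (τ - y) 0 ≤ max (τ - a) 0 + max (τ - b) 0 := by
  have h1 : τ - a ≤ max (τ - a) 0 := le_max_left _ _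
  have h2 : τ - b ≤ max (τ - b) 0 := le_max_left _ _
  have h3 : (0:ℝ) ≤ max (τ - a) 0 := le_max_right _ _
  have h4 : (0:ℝ) ≤ max (τ - b) 0 := le_max_right _ _
  rcases le_or_gt (τ - x) 0 with hx | hx <;> rcases le_or_gt (τ - y) 0 with hy | hy
  · rw [max_eq_right hx, max_eq_right hy]; linarith
  · rw [max_eq_right hx, max_eq_left hy.le]; linarith
  · rw [max_eq_left hx.le, max_eq_right hy]; linarith
  · rw [max_eq_left hx.le, max_eq_left hy.le]; linarith

/-- If f(·, y) is submodular (and monotone increasing) for every realization y,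
then H(·, τ) is submodular for every fixed τ. -/
theorem auxiliary_submodular_in_S {E : Type*} [DecidableEq E] {n : ℕ}
    (p : Fin n → ℝ) (hp : ∀ i, 0 ≤ p i) (hp1 : ∑ i, p i = 1)
    (f : Finset E → Fin n → ℝ)
    (hsub : ∀ i : Fin n, ∀ S T : Finset E,
      f S i + f T i ≥ f (S ∪ T) i + f (S ∩ T) i)
    (hmono : ∀ i : Fin n, ∀ S T : Finset E, S ⊆ T → f S i ≤ f T i)
    (α : ℝ) (hα0 : 0 < α) (hα1 : α ≤ 1)
    (H : Finset E → ℝ → ℝ)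
    (hH : ∀ S τ, H S τ = τ - (1 / α) * ∑ i, p i * max (τ - f S i) 0) :
    ∀ τ : ℝ, ∀ S T : Finset E, H S τ + H T τ ≥ H (S ∪ T) τ + H (S ∩ T) τ := by
  intro τ S T
  have hterm : ∀ i : Fin n,
      p i * max (τ - f S i) 0 + p i * max (τ - f T i) 0 ≤
      p i * max (τ - f (S ∪ T) i) 0 + p i * max (τ - f (S ∩ T) i) 0 := by
    intro i
    have ha1 : f (S ∩ T) i ≤ f S i := hmono i _ _ Finset.inter_subset_left
    have ha2 : f (S ∩ T) i ≤ f T i := hmono i _ _ Finset.inter_subset_right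
    have hkey := key_plus τ (f (S ∩ T) i) (f S i + f T i - f (S ∩ T) i)
      (f S i) (f T i) ha1 ha2 (by ring)
    have hb : f (S ∪ T) i ≤ f S i + f T i - f (S ∩ T) i := by
      have := hsub i S T; linarith
    have hmax : max (τ - (f S i + f T i - f (S ∩ T) i)) 0 ≤
        max (τ - f (S ∪ T) i) 0 := max_le_max (by linarith) le_rfl
    have : max (τ - f S i) 0 + max (τ - f T i) 0 ≤
        max (τ - f (S ∪ T) i) 0 + max (τ - f (S ∩ T) i) 0 := by linarith
    nlinarith [hp i]
  have hsum2 : ∑ i, (p i * max (τ - f S i) 0 + p i * max (τ - f T i) 0) ≤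
      ∑ i, (p i * max (τ - f (S ∪ T) i) 0 + p i * max (τ - f (S ∩ T) i) 0) :=
    Finset.sum_le_sum fun i _ => hterm i
  rw [Finset.sum_add_distrib, Finset.sum_add_distrib] at hsum2
  have hαinv : (0:ℝ) ≤ 1 / α := by positivity
  have := mul_le_mul_of_nonneg_left hsum2 hαinv
  rw [hH S τ, hH T τ, hH (S ∪ T) τ, hH (S ∩ T) τ]
  rw [mul_add, mul_add] at this
  linarith
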